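/- Let B be a finite Blaschke product of degree n, M ≠ id a Möbius transformation of the disc with B ∘ M = B, k the order of M, and γ ∈ 𝔻 a fixed point of M. Then B can be written as B = B₂ ∘ B₁ where B₁(z) = ((z - γ)/(1 - \bar{γ}z))^k is a Blaschke product of degree k and B₂ is a finite Blaschke product of degree n/k. -/

import Mathlib

/-!
Write `φ_a z = (z - a) / (1 - conj a z)`. Since `φ_γ` is an automorphism of the disc and
`M γ = γ`, the map `φ_γ ∘ M ∘ φ_γ⁻¹` is the rotation `w ↦ λ w`, and `M^[k] = id` with `k`
minimal forces `λ` to be a primitive `k`-th root of unity. In the coordinate `w = φ_γ z`,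
`B` becomes a Blaschke product `c' ∏_{s ∈ S} φ_s` with `S = φ_γ(a_i)`, and `B ∘ M = B` says
that it is invariant under `w ↦ λ w`. A Blaschke product determines its zero multiset and its
unimodular constant (the zeros of its denominator lie outside the disc), so `λ⁻¹ S = S` and
`λ^n = 1`, whence `k ∣ n`. The nonzero points of `S` then split into orbits
`{λ^t s : t < k}` with `∏_t φ_{λ^t s}(w) = φ_{s^k}(w^k)`, and the zeros at `0` come in groups
of `k` contributing `w^k = φ_0(w^k)` each.
-/

open Polynomial ComplexConjugate Metric Set Complex

noncomputable def blaschkeFactor (a z : ℂ) : ℂ := (z - a) / (1 - conj a * z)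

section blaschkeFactor

variable {a z : ℂ}

lemma one_sub_conj_mul_ne_zero (ha : ‖a‖ < 1) (hz : ‖z‖ < 1) : 1 - conj a * z ≠ 0 := by
  rw [sub_ne_zero]
  intro h
  have := congrArg norm h
  rw [norm_one, norm_mul, norm_conj] at this
  nlinarith [norm_nonneg a, norm_nonneg z]

lemma blaschkeFactor_zero_left (z : ℂ) : blaschkeFactor 0 z = z := by
  simp [blaschkeFactor]

lemma norm_blaschkeFactor_lt_one (ha : ‖a‖ < 1) (hz : ‖z‖ < 1) : ‖blaschkeFactor a z‖ < 1 := by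
  have hd := one_sub_conj_mul_ne_zero ha hz
  rw [blaschkeFactor, norm_div, div_lt_one (norm_pos_iff.mpr hd), ← sq_lt_sq₀ (norm_nonneg _)
    (norm_nonneg _), ← normSq_eq_norm_sq, ← normSq_eq_norm_sq]
  have key : normSq (1 - conj a * z) - normSq (z - a) = (1 - normSq a) * (1 - normSq z) := by
    simp only [normSq_apply, sub_re, sub_im, mul_re, mul_im, conj_re, conj_im, one_re, one_im]
    ring
  have ha' : normSq a < 1 := by rw [normSq_eq_norm_sq]; nlinarith [norm_nonneg a]
  have hz' : normSq z < 1 := by rw [normSq_eq_norm_sq]; nlinarith [norm_nonneg z]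
  nlinarith [mul_pos (sub_pos.2 ha') (sub_pos.2 hz')]

lemma mapsTo_blaschkeFactor (ha : ‖a‖ < 1) :
    MapsTo (blaschkeFactor a) (ball (0 : ℂ) 1) (ball (0 : ℂ) 1) := fun _ hz =>
  mem_ball_zero_iff.2 (norm_blaschkeFactor_lt_one ha (mem_ball_zero_iff.1 hz))

lemma leftInvOn_blaschkeFactor_neg (ha : ‖a‖ < 1) :
    LeftInvOn (blaschkeFactor (-a)) (blaschkeFactor a) (ball (0 : ℂ) 1) := by
  intro z hz
  have hdz := one_sub_conj_mul_ne_zero ha (mem_ball_zero_iff.1 hz)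
  have hda := one_sub_conj_mul_ne_zero ha ha
  unfold blaschkeFactor
  -- naming the denominator makes `field_simp` treat it as an atom it knows to be nonzero
  generalize hD : 1 - conj a * z = D at hdz
  have hden : 1 - conj (-a) * ((z - a) / D) = (1 - conj a * a) / D := by
    field_simp
    subst hD
    simp only [map_neg]
    ring
  rw [hden, div_eq_iff (div_ne_zero hda hdz)]
  field_simp
  subst hD
  ring

lemma rightInvOn_blaschkeFactor_neg (ha : ‖a‖ < 1) :
    RightInvOn (blaschkeFactor (-a)) (blaschkeFactor a) (ball (0 : ℂ) 1) := by
  simpa using leftInvOn_blaschkeFactor_neg (a := -a) (by rwa [norm_neg])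

end blaschkeFactor

lemma blaschkeFactor_mobius_eq_mul {e α w z : ℂ} (he : ‖e‖ = 1) (hα : ‖α‖ < 1)
    (hw : ‖w‖ < 1) (hz : ‖z‖ < 1) :
    blaschkeFactor (e * blaschkeFactor α w) (e * blaschkeFactor α z) =
      e * (conj (1 - conj α * w) / (1 - conj α * w)) * blaschkeFactor w z := by
  have hdz := one_sub_conj_mul_ne_zero hα hz
  have hdw := one_sub_conj_mul_ne_zero hα hw
  have hdα := one_sub_conj_mul_ne_zero hα hα
  have hee : conj e * e = 1 := by
    rw [mul_comm, mul_conj, normSq_eq_norm_sq, he]; norm_num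
  unfold blaschkeFactor
  generalize hDz : 1 - conj α * z = Dz at hdz
  generalize hDw : 1 - conj α * w = Dw at hdw
  have hdw' : conj Dw ≠ 0 := by simpa using hdw
  have hnum : e * ((z - α) / Dz) - e * ((w - α) / Dw) =
      e * (1 - conj α * α) * (z - w) / (Dz * Dw) := by
    field_simp
    subst hDz hDw
    ring
  have hden : 1 - conj (e * ((w - α) / Dw)) * (e * ((z - α) / Dz)) =
      (1 - conj α * α) * (1 - conj w * z) / (conj Dw * Dz) := by
    simp only [map_mul, map_div₀, map_sub]
    field_simp
    subst hDz hDw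
    simp only [map_sub, map_one, map_mul, conj_conj]
    linear_combination (α * conj w - α * conj α - conj w * z + conj α * z) * hee
  rw [hnum, hden]
  field_simp

noncomputable def blaschkeProd (S : Multiset ℂ) (z : ℂ) : ℂ :=
  (S.map (blaschkeFactor · z)).prod

lemma blaschkeProd_add (S T : Multiset ℂ) (z : ℂ) :
    blaschkeProd (S + T) z = blaschkeProd S z * blaschkeProd T z := by
  simp only [blaschkeProd, Multiset.map_add, Multiset.prod_add]

lemma blaschkeProd_mul_left {c : ℂ} (hc : ‖c‖ = 1) (S : Multiset ℂ) (w : ℂ) :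
    blaschkeProd S (c * w) = c ^ Multiset.card S * blaschkeProd (S.map (c⁻¹ * ·)) w := by
  have hc0 : c ≠ 0 := norm_ne_zero_iff.1 (hc ▸ one_ne_zero)
  have hconj : conj c⁻¹ = c := by
    rw [inv_def, normSq_eq_norm_sq, hc]
    simp
  have hfactor : ∀ s, blaschkeFactor s (c * w) = c * blaschkeFactor (c⁻¹ * s) w := by
    intro s
    rw [blaschkeFactor, blaschkeFactor, map_mul, hconj, mul_div_assoc']
    congr 1
    · field_simp
    · ring
  simp only [blaschkeProd, hfactor, Multiset.prod_map_mul, Multiset.map_const',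
    Multiset.prod_replicate, Multiset.map_map, Function.comp_def]

noncomputable def blaschkeDenom (S : Multiset ℂ) : ℂ[X] :=
  (S.map fun s => 1 - C (conj s) * X).prod

section blaschkeDenom

variable {S : Multiset ℂ}

lemma eval_blaschkeDenom_ne_zero (hS : ∀ s ∈ S, ‖s‖ < 1) {w : ℂ} (hw : ‖w‖ < 1) :
    (blaschkeDenom S).eval w ≠ 0 := by
  simp only [blaschkeDenom, eval_multiset_prod, Multiset.map_map, Function.comp_def, eval_sub,
    eval_one, eval_mul, eval_C, eval_X]
  refine Multiset.prod_ne_zero fun h => ?_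
  obtain ⟨s, hs, h0⟩ := Multiset.mem_map.1 h
  exact one_sub_conj_mul_ne_zero (hS s hs) hw h0

lemma blaschkeDenom_ne_zero (hS : ∀ s ∈ S, ‖s‖ < 1) : blaschkeDenom S ≠ 0 := fun h =>
  eval_blaschkeDenom_ne_zero hS (w := 0) (by simp) (by rw [h, eval_zero])

lemma filter_roots_blaschkeDenom (hS : ∀ s ∈ S, ‖s‖ < 1) :
    (blaschkeDenom S).roots.filter (‖·‖ < 1) = 0 :=
  Multiset.filter_eq_nil.2 fun _ hx hlt =>
    eval_blaschkeDenom_ne_zero hS hlt ((mem_roots (blaschkeDenom_ne_zero hS)).1 hx)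

lemma blaschkeProd_eq_eval_div (S : Multiset ℂ) (w : ℂ) :
    blaschkeProd S w = (S.map fun s => X - C s).prod.eval w / (blaschkeDenom S).eval w := by
  simp only [blaschkeProd, blaschkeFactor, blaschkeDenom, Multiset.prod_map_div,
    eval_multiset_prod, Multiset.map_map, Function.comp_def, eval_sub, eval_one, eval_mul,
    eval_C, eval_X]

end blaschkeDenom

theorem eq_and_eq_of_mul_blaschkeProd_eqOn {S₁ S₂ : Multiset ℂ} {c₁ c₂ : ℂ}
    (h₁ : ∀ s ∈ S₁, ‖s‖ < 1) (h₂ : ∀ s ∈ S₂, ‖s‖ < 1) (hc₁ : c₁ ≠ 0) (hc₂ : c₂ ≠ 0)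
    (h : ∀ w ∈ ball (0 : ℂ) 1, c₁ * blaschkeProd S₁ w = c₂ * blaschkeProd S₂ w) :
    S₁ = S₂ ∧ c₁ = c₂ := by
  set P : Multiset ℂ → ℂ[X] := fun S => (S.map fun s => X - C s).prod
  have hP : ∀ S, P S ≠ 0 := fun S =>
    (monic_multiset_prod_of_monic _ _ fun s _ => monic_X_sub_C s).ne_zero
  have hpoly : C c₁ * (P S₁ * blaschkeDenom S₂) = C c₂ * (P S₂ * blaschkeDenom S₁) := by
    refine eq_of_infinite_eval_eq _ _ ((infinite_of_mem_nhds 0 (ball_mem_nhds 0 one_pos)).mono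
      fun w hw => ?_)
    have hw' : ‖w‖ < 1 := mem_ball_zero_iff.1 hw
    have := h w hw
    rw [blaschkeProd_eq_eval_div, blaschkeProd_eq_eval_div, mul_div_assoc', mul_div_assoc',
      div_eq_div_iff (eval_blaschkeDenom_ne_zero h₁ hw') (eval_blaschkeDenom_ne_zero h₂ hw')]
      at this
    simp only [mem_ofPred_eq, eval_mul, eval_C]
    linear_combination this
  have hroots := congrArg (fun p => p.roots.filter (‖·‖ < 1)) hpoly
  simp only [roots_C_mul _ hc₁, roots_C_mul _ hc₂, roots_mul (mul_ne_zero (hP _)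
    (blaschkeDenom_ne_zero h₂)), roots_mul (mul_ne_zero (hP _) (blaschkeDenom_ne_zero h₁)),
    P, roots_multiset_prod_X_sub_C, Multiset.filter_add, filter_roots_blaschkeDenom h₁,
    filter_roots_blaschkeDenom h₂, Multiset.filter_eq_self.2 h₁, Multiset.filter_eq_self.2 h₂,
    add_zero] at hroots
  subst hroots
  exact ⟨rfl, C_injective
    (mul_right_cancel₀ (mul_ne_zero (hP _) (blaschkeDenom_ne_zero h₁)) hpoly)⟩

lemma map_inv_mul_eq_and_pow_card_eq_one_of_blaschkeProd_mul_eq {c : ℂ} (hc : ‖c‖ = 1)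
    {S : Multiset ℂ} (hS : ∀ s ∈ S, ‖s‖ < 1)
    (h : ∀ w ∈ ball (0 : ℂ) 1, blaschkeProd S (c * w) = blaschkeProd S w) :
    S.map (c⁻¹ * ·) = S ∧ c ^ Multiset.card S = 1 := by
  have hc0 : c ≠ 0 := norm_ne_zero_iff.1 (hc ▸ one_ne_zero)
  have hS' : ∀ s ∈ S.map (c⁻¹ * ·), ‖s‖ < 1 := by
    simp only [Multiset.mem_map]
    rintro _ ⟨s, hs, rfl⟩
    rw [norm_mul, norm_inv, hc, inv_one, one_mul]
    exact hS s hs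
  refine eq_and_eq_of_mul_blaschkeProd_eqOn hS' hS (pow_ne_zero _ hc0) one_ne_zero
    fun w hw => ?_
  rw [← blaschkeProd_mul_left hc, h w hw, one_mul]

namespace IsPrimitiveRoot

variable {ζ : ℂ} {k : ℕ}

lemma prod_range_sub_pow_mul (hζ : IsPrimitiveRoot ζ k) (hk : 0 < k) (x y : ℂ) :
    ∏ i ∈ Finset.range k, (x - ζ ^ i * y) = x ^ k - y ^ k := by
  simpa [eval_prod] using
    congrArg (eval x) (X_pow_sub_C_eq_prod hζ hk (rfl : y ^ k = y ^ k)).symm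

lemma blaschkeProd_nthRoots_pow (hζ : IsPrimitiveRoot ζ k) (hk : 0 < k) (s w : ℂ) :
    blaschkeProd (nthRoots k (s ^ k)) w = blaschkeFactor (s ^ k) (w ^ k) := by
  have hζ' : IsPrimitiveRoot (conj ζ) k := hζ.map_of_injective (RingHom.injective _)
  rw [blaschkeProd, hζ.nthRoots_eq rfl, Multiset.map_map, ← Finset.range_val,
    ← Finset.prod_eq_multiset_prod]
  have hden := hζ'.prod_range_sub_pow_mul hk 1 (conj s * w)
  simp only [one_pow] at hden
  simp only [Function.comp_apply, blaschkeFactor, Finset.prod_div_distrib,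
    hζ.prod_range_sub_pow_mul hk, map_mul, map_pow, mul_assoc, hden, mul_pow]

lemma map_mul_nthRoots_pow (hζ : IsPrimitiveRoot ζ k) (s : ℂ) :
    (nthRoots k (s ^ k)).map (ζ * ·) = nthRoots k (s ^ k) := by
  have hζs : (ζ * s) ^ k = s ^ k := by rw [mul_pow, hζ.pow_eq_one, one_mul]
  calc (nthRoots k (s ^ k)).map (ζ * ·) = (Multiset.range k).map (ζ ^ · * (ζ * s)) := by
        rw [hζ.nthRoots_eq rfl, Multiset.map_map]
        congr 1
        funext i
        simp only [Function.comp_apply]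
        ring
    _ = nthRoots k (s ^ k) := (hζ.nthRoots_eq hζs).symm

lemma nthRoots_pow_le (hζ : IsPrimitiveRoot ζ k) {S : Multiset ℂ} (hS : S.map (ζ * ·) = S)
    {s : ℂ} (hs : s ∈ S) (hs0 : s ≠ 0) : nthRoots k (s ^ k) ≤ S := by
  have hmem : ∀ i : ℕ, ζ ^ i * s ∈ S := by
    intro i
    induction i with
    | zero => simpa using hs
    | succ i ih =>
      rw [pow_succ', mul_assoc, ← hS]
      exact Multiset.mem_map_of_mem _ ih
  refine (Multiset.le_iff_subset (hζ.nthRoots_nodup (pow_ne_zero k hs0))).2 fun x hx => ?_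
  rw [hζ.nthRoots_eq rfl] at hx
  obtain ⟨i, -, rfl⟩ := Multiset.mem_map.1 hx
  exact hmem i

theorem exists_blaschkeProd_eq_prod_blaschkeFactor_pow (hζ : IsPrimitiveRoot ζ k) (hk : 0 < k)
    (q : ℕ) (S : Multiset ℂ) (hcard : Multiset.card S = k * q) (hS : S.map (ζ * ·) = S)
    (hS1 : ∀ s ∈ S, ‖s‖ < 1) :
    ∃ b : Fin q → ℂ, (∀ i, ‖b i‖ < 1) ∧
      ∀ w, blaschkeProd S w = ∏ i, blaschkeFactor (b i) (w ^ k) := by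
  induction q generalizing S with
  | zero =>
    rw [mul_zero, Multiset.card_eq_zero] at hcard
    exact ⟨finZeroElim, finZeroElim, fun w => by simp [hcard, blaschkeProd]⟩
  | succ q ih =>
    by_cases h0 : ∀ s ∈ S, s = 0
    · refine ⟨0, fun _ => by simp, fun w => ?_⟩
      rw [Multiset.eq_replicate.2 ⟨hcard, h0⟩]
      simp [blaschkeProd, blaschkeFactor_zero_left, pow_mul]
    push Not at h0
    obtain ⟨s, hs, hs0⟩ := h0
    set O := nthRoots k (s ^ k) with hO
    have hOS := hζ.nthRoots_pow_le hS hs hs0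
    have hsum : (S - O) + O = S := tsub_add_cancel_of_le hOS
    have hOcard : Multiset.card O = k := by
      rw [hO, hζ.nthRoots_eq rfl, Multiset.card_map, Multiset.card_range]
    have hinv : (S - O).map (ζ * ·) = S - O := by
      have h := congrArg (Multiset.map (ζ * ·)) hsum
      rw [Multiset.map_add, hζ.map_mul_nthRoots_pow, hS] at h
      exact add_right_cancel (h.trans hsum.symm)
    obtain ⟨b, hb, hSb⟩ := ih (S - O)
      (by rw [Multiset.card_sub hOS, hcard, hOcard, Nat.mul_succ, Nat.add_sub_cancel]) hinv
      (fun x hx => hS1 x (Multiset.mem_of_le (Multiset.sub_le_self S O) hx))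
    have hsk : ‖s ^ k‖ < 1 := by
      simpa only [norm_pow] using pow_lt_one₀ (norm_nonneg s) (hS1 s hs) hk.ne'
    refine ⟨Fin.cons (s ^ k) b, Fin.cases hsk hb, fun w => ?_⟩
    rw [← hsum, blaschkeProd_add, hSb, hζ.blaschkeProd_nthRoots_pow hk, Fin.prod_univ_succ,
      Fin.cons_zero, mul_comm]
    simp only [Fin.cons_succ]

theorem exists_blaschkeProd_eq_of_blaschkeProd_mul_eq (hζ : IsPrimitiveRoot ζ k) (hk : 0 < k)
    {S : Multiset ℂ} (hS : ∀ s ∈ S, ‖s‖ < 1) {n : ℕ} (hn : Multiset.card S = n)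
    (h : ∀ w ∈ ball (0 : ℂ) 1, blaschkeProd S (ζ * w) = blaschkeProd S w) :
    k ∣ n ∧ ∃ b : Fin (n / k) → ℂ, (∀ i, ‖b i‖ < 1) ∧
      ∀ w, blaschkeProd S w = ∏ i, blaschkeFactor (b i) (w ^ k) := by
  obtain ⟨hSinv, hpow⟩ :=
    map_inv_mul_eq_and_pow_card_eq_one_of_blaschkeProd_mul_eq (hζ.norm'_eq_one hk.ne') hS h
  have hdvd : k ∣ n := hζ.dvd_of_pow_eq_one n (hn ▸ hpow)
  exact ⟨hdvd, hζ.inv.exists_blaschkeProd_eq_prod_blaschkeFactor_pow hk (n / k) S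
    (by rw [hn, Nat.mul_div_cancel' hdvd]) hSinv hS⟩

end IsPrimitiveRoot

section Semiconj

variable {α : Type*} {f : α → α} {s : Set α}

lemma apply_iterate_eq_pow_mul {M : Type*} [Monoid M] {φ : α → M} {c : M} (hf : MapsTo f s s)
    (h : ∀ z ∈ s, φ (f z) = c * φ z) (j : ℕ) {z : α} (hz : z ∈ s) :
    φ (f^[j] z) = c ^ j * φ z := by
  induction j with
  | zero => simp
  | succ j ih =>
    rw [Function.iterate_succ_apply', h _ (hf.iterate j hz), ih, pow_succ', mul_assoc]

lemma isPrimitiveRoot_of_iterate {M₀ : Type*} [CommMonoidWithZero M₀] [IsRightCancelMulZero M₀]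
    {φ : α → M₀} {c : M₀} (hf : MapsTo f s s) (h : ∀ z ∈ s, φ (f z) = c * φ z)
    (hφ : InjOn φ s) {z₀ : α} (hz₀ : z₀ ∈ s) (hφz₀ : φ z₀ ≠ 0) {k : ℕ} (hk : 0 < k)
    (hord : ∀ z ∈ s, f^[k] z = z) (hmin : ∀ j : ℕ, 0 < j → j < k → ∃ z ∈ s, f^[j] z ≠ z) :
    IsPrimitiveRoot c k := by
  have hpow : ∀ j, c ^ j = 1 ↔ ∀ z ∈ s, f^[j] z = z := fun j =>
    ⟨fun hc z hz => hφ (hf.iterate j hz) hz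
        (by rw [apply_iterate_eq_pow_mul hf h j hz, hc, one_mul]),
      fun H => mul_right_cancel₀ hφz₀
        (by rw [← apply_iterate_eq_pow_mul hf h j hz₀, H z₀ hz₀, one_mul])⟩
  refine IsPrimitiveRoot.mk_of_lt c hk ((hpow k).2 hord) fun j hj hjk hcj => ?_
  obtain ⟨z, hz, hfz⟩ := hmin j hj hjk
  exact hfz ((hpow j).1 hcj z hz)

lemma apply_mul_eq_of_semiconj {β δ : Type*} [Mul β] {t : Set β} {φ : α → β} {ψ : β → α}
    {F : α → δ} {G : β → δ} {c : β} (hψ : MapsTo ψ t s) (hφψ : RightInvOn ψ φ t)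
    (hF : ∀ z ∈ s, F z = G (φ z)) (hf : MapsTo f s s) (hFf : ∀ z ∈ s, F (f z) = F z)
    (h : ∀ z ∈ s, φ (f z) = c * φ z) {w : β} (hw : w ∈ t) : G (c * w) = G w := by
  have hz := hψ hw
  calc G (c * w) = G (φ (f (ψ w))) := by rw [h _ hz, hφψ hw]
    _ = G w := by rw [← hF _ (hf hz), hFf _ hz, hF _ hz, hφψ hw]

end Semiconj

lemma exists_blaschkeFactor_mobius_eq_mul_of_fixed {e α γ : ℂ} (he : ‖e‖ = 1) (hα : ‖α‖ < 1)
    (hγ : ‖γ‖ < 1) (hfix : e * blaschkeFactor α γ = γ) :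
    ∃ c : ℂ, ∀ z ∈ ball (0 : ℂ) 1,
      blaschkeFactor γ (e * blaschkeFactor α z) = c * blaschkeFactor γ z :=
  ⟨_, fun z hz => by
    rw [← blaschkeFactor_mobius_eq_mul he hα hγ (mem_ball_zero_iff.1 hz), hfix]⟩

lemma exists_prod_blaschkeFactor_eq_mul_blaschkeProd {ι : Type*} [Fintype ι] {a : ι → ℂ}
    (ha : ∀ i, ‖a i‖ < 1) {γ : ℂ} (hγ : ‖γ‖ < 1) :
    ∃ (u : ℂ) (S : Multiset ℂ), ‖u‖ = 1 ∧ Multiset.card S = Fintype.card ι ∧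
      (∀ s ∈ S, ‖s‖ < 1) ∧ ∀ z ∈ ball (0 : ℂ) 1,
        ∏ i, blaschkeFactor (a i) z = u * blaschkeProd S (blaschkeFactor γ z) := by
  set u : ι → ℂ := fun i => (1 - conj γ * a i) / conj (1 - conj γ * a i)
  have hfactor : ∀ i, ∀ z ∈ ball (0 : ℂ) 1, blaschkeFactor (a i) z =
      u i * blaschkeFactor (blaschkeFactor γ (a i)) (blaschkeFactor γ z) := by
    intro i z hz
    have hd := one_sub_conj_mul_ne_zero hγ (ha i)
    have := blaschkeFactor_mobius_eq_mul norm_one hγ (ha i) (mem_ball_zero_iff.1 hz)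
    simp only [one_mul] at this
    rw [this, ← mul_assoc, div_mul_div_cancel₀ ((_root_.map_ne_zero _).2 hd), div_self hd,
      one_mul]
  refine ⟨∏ i, u i, Finset.univ.val.map (blaschkeFactor γ ∘ a), ?_, by simp, ?_, fun z hz => ?_⟩
  · rw [norm_prod]
    refine Finset.prod_eq_one fun i _ => ?_
    have hd := one_sub_conj_mul_ne_zero hγ (ha i)
    rw [norm_div, norm_conj, div_self (norm_ne_zero_iff.2 hd)]
  · simp only [Multiset.mem_map]
    rintro _ ⟨i, -, rfl⟩
    exact norm_blaschkeFactor_lt_one hγ (ha i)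
  · simp only [hfactor _ z hz, Finset.prod_mul_distrib, blaschkeProd, Multiset.map_map,
      Function.comp_def, ← Finset.prod_eq_multiset_prod]

theorem decomposition_of_invariant_general (n : ℕ) (c : ℂ) (hc : ‖c‖ = 1)
    (a : Fin n → ℂ) (ha : ∀ i, ‖a i‖ < 1) (B : ℂ → ℂ)
    (hB : ∀ z, B z = c * ∏ i, (z - a i) / (1 - (starRingEnd ℂ) (a i) * z))
    (e α : ℂ) (he : ‖e‖ = 1) (hα : ‖α‖ < 1) (M : ℂ → ℂ)
    (hM : ∀ z, M z = e * (z - α) / (1 - (starRingEnd ℂ) α * z))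
    (hinv : ∀ z ∈ Metric.ball (0 : ℂ) 1, B (M z) = B z)
    (k : ℕ) (hk : 2 ≤ k)
    (hord : ∀ z ∈ Metric.ball (0 : ℂ) 1, M^[k] z = z)
    (hmin : ∀ j : ℕ, 0 < j → j < k → ∃ z ∈ Metric.ball (0 : ℂ) 1, M^[j] z ≠ z)
    (γ : ℂ) (hγ : ‖γ‖ < 1) (hfix : M γ = γ) :
    k ∣ n ∧ ∃ (e' : ℂ) (b : Fin (n / k) → ℂ), ‖e'‖ = 1 ∧
      (∀ i, ‖b i‖ < 1) ∧
      ∀ z ∈ Metric.ball (0 : ℂ) 1,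
        B z = e' * ∏ i, (((z - γ) / (1 - (starRingEnd ℂ) γ * z)) ^ k - b i) /
          (1 - (starRingEnd ℂ) (b i) * ((z - γ) / (1 - (starRingEnd ℂ) γ * z)) ^ k) := by
  have hM' : ∀ z, M z = e * blaschkeFactor α z := fun z => by
    rw [hM, mul_div_assoc, blaschkeFactor]
  have hMD : MapsTo M (ball 0 1) (ball 0 1) := fun z hz => by
    simpa [hM', norm_mul, he] using mapsTo_blaschkeFactor hα hz
  obtain ⟨l, hrot⟩ := exists_blaschkeFactor_mobius_eq_mul_of_fixed he hα hγ (by rw [← hM', hfix])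
  have hMrot : ∀ z ∈ ball (0 : ℂ) 1, blaschkeFactor γ (M z) = l * blaschkeFactor γ z :=
    fun z hz => by rw [hM', hrot z hz]
  have hγ' : ‖-γ‖ < 1 := by rwa [norm_neg]
  have hhalf : (2⁻¹ : ℂ) ∈ ball (0 : ℂ) 1 := by norm_num
  have hprim : IsPrimitiveRoot l k := isPrimitiveRoot_of_iterate hMD hMrot
    (leftInvOn_blaschkeFactor_neg hγ).injOn (mapsTo_blaschkeFactor hγ' hhalf)
    (by rw [rightInvOn_blaschkeFactor_neg hγ hhalf]; norm_num) (by omega) hord hmin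
  obtain ⟨u, S, hu, hn, hS, hBu⟩ := exists_prod_blaschkeFactor_eq_mul_blaschkeProd ha hγ
  have hcu : c * u ≠ 0 := by rw [← norm_ne_zero_iff, norm_mul, hc, hu]; norm_num
  have hBS : ∀ z ∈ ball (0 : ℂ) 1, B z = c * u * blaschkeProd S (blaschkeFactor γ z) :=
    fun z hz => by rw [hB, mul_assoc, ← hBu z hz]; rfl
  have hSrot : ∀ w ∈ ball (0 : ℂ) 1, blaschkeProd S (l * w) = blaschkeProd S w := fun w hw =>
    mul_left_cancel₀ hcu (apply_mul_eq_of_semiconj (G := fun w => c * u * blaschkeProd S w)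
      (mapsTo_blaschkeFactor hγ') (rightInvOn_blaschkeFactor_neg hγ) hBS hMD hinv hMrot hw)
  obtain ⟨hdvd, b, hb, hSb⟩ := hprim.exists_blaschkeProd_eq_of_blaschkeProd_mul_eq (by omega) hS
    (hn.trans (Fintype.card_fin n)) hSrot
  refine ⟨hdvd, c * u, b, by rw [norm_mul, hc, hu, one_mul], hb, fun z hz => ?_⟩
  rw [hBS z hz, hSb]
  rfl

/-- If `B ∘ M = B` for a Möbius transformation `M ≠ id` of order `k` with fixed
point `γ ∈ 𝔻`, then `B = B₂ ∘ B₁` with `B₁ z = ((z - γ)/(1 - conj γ z))^k` and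
`B₂` a finite Blaschke product of degree `n / k`. -/
theorem decomposition_of_invariant (n : ℕ) (c : ℂ) (hc : ‖c‖ = 1)
    (a : Fin n → ℂ) (ha : ∀ i, ‖a i‖ < 1) (B : ℂ → ℂ)
    (hB : ∀ z, B z = c * ∏ i, (z - a i) / (1 - (starRingEnd ℂ) (a i) * z))
    (e α : ℂ) (he : ‖e‖ = 1) (hα : ‖α‖ < 1) (M : ℂ → ℂ)
    (hM : ∀ z, M z = e * (z - α) / (1 - (starRingEnd ℂ) α * z))
    (hne : ∃ z ∈ Metric.ball (0 : ℂ) 1, M z ≠ z)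
    (hinv : ∀ z ∈ Metric.ball (0 : ℂ) 1, B (M z) = B z)
    (k : ℕ) (hk : 2 ≤ k)
    (hord : ∀ z ∈ Metric.ball (0 : ℂ) 1, M^[k] z = z)
    (hmin : ∀ j : ℕ, 0 < j → j < k → ∃ z ∈ Metric.ball (0 : ℂ) 1, M^[j] z ≠ z)
    (γ : ℂ) (hγ : ‖γ‖ < 1) (hfix : M γ = γ) :
    k ∣ n ∧ ∃ (e' : ℂ) (b : Fin (n / k) → ℂ), ‖e'‖ = 1 ∧
      (∀ i, ‖b i‖ < 1) ∧
      ∀ z ∈ Metric.ball (0 : ℂ) 1,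
        B z = e' * ∏ i, (((z - γ) / (1 - (starRingEnd ℂ) γ * z)) ^ k - b i) /
          (1 - (starRingEnd ℂ) (b i) * ((z - γ) / (1 - (starRingEnd ℂ) γ * z)) ^ k) :=
  decomposition_of_invariant_general n c hc a ha B hB e α he hα M hM hinv k hk hord hmin γ hγ hfix
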